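/- arXiv:2202.05576 — 3 statements merged into one kernel-verified Lean document; each statement's English description precedes it below -/
import Mathlib

section
/- Jarzynski's equality for Markov chains: if X = (X_n)_{n=0}^N is a Markov chain on a finite state space whose initial distribution p_0 has non-zero entries and whose transition matrices are irreducible, then for any family of energies E of X and any β > 0, the expectation E[e^{-β(W(X) - ΔF)}] = 1, where W is the work and ΔF = F_N - F_0 is the free energy difference. -/
/-!
In Gibbs form, `β (E_n x - F_n) = -log p_n x`, so along every path the exponent telescopes:
`e^{-β(W - ΔF)} = ∏ₙ p_{n+1}(xₙ) / pₙ(xₙ)`. Absorbing these ratios into the transitions gives the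
weights `M_{n+1}(b, a) p_{n+1}(a) / pₙ(a)`, which carry `pₙ` to `p_{n+1}` exactly because `p_{n+1}`
is stationary for `M_{n+1}`. Summing the path weights one step at a time therefore leaves
`∑ p_N = 1`.
-/

open Finset

theorem sum_paths_eq_sum_last_of_transport {S R : Type*} [Fintype S] [CommSemiring R] :
    ∀ (N : ℕ) (q : ℕ → S → R) (g : ℕ → S → S → R),
    (∀ n < N, ∀ b, ∑ a, q n a * g n a b = q (n + 1) b) →
    ∑ x : Fin (N + 1) → S, q 0 (x 0) * ∏ n : Fin N, g n (x n.castSucc) (x n.succ) = ∑ b, q N b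
  | 0, q, g, _ => by
    simpa using (Equiv.funUnique (Fin 1) S).sum_comp (q 0)
  | N + 1, q, g, h => by
    have step : ∀ y : Fin (N + 1) → S, ∑ a, q 0 a * g 0 a (y 0) = q 1 (y 0) :=
      fun y => h 0 (by omega) (y 0)
    rw [← (Fin.consEquiv fun _ => S).sum_comp, Fintype.sum_prod_type, sum_comm]
    simp only [Fin.consEquiv_apply, Fin.prod_univ_succ, ← Fin.succ_castSucc, Fin.cons_zero,
      Fin.cons_succ, Fin.castSucc_zero, Fin.val_succ, Fin.val_zero, ← mul_assoc, ← sum_mul, step]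
    exact sum_paths_eq_sum_last_of_transport N (fun n => q (n + 1)) (fun n => g (n + 1))
      fun n hn b => h (n + 1) (by omega) b

noncomputable section Gibbs

variable {S : Type*} [Fintype S] (β : ℝ) (E : S → ℝ)

def partitionFunction : ℝ := ∑ y, Real.exp (-β * E y)

def freeEnergy : ℝ := -(1 / β) * Real.log (partitionFunction β E)

def gibbs (x : S) : ℝ := Real.exp (-β * E x) / partitionFunction β E

variable [Nonempty S]

lemma partitionFunction_pos : 0 < partitionFunction β E :=
  sum_pos (fun _ _ => Real.exp_pos _) univ_nonempty

lemma gibbs_pos (x : S) : 0 < gibbs β E x :=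
  div_pos (Real.exp_pos _) (partitionFunction_pos β E)

lemma sum_gibbs : ∑ x, gibbs β E x = 1 := by
  simp only [gibbs, ← sum_div]
  exact div_self (partitionFunction_pos β E).ne'

lemma log_gibbs (hβ : β ≠ 0) (x : S) :
    Real.log (gibbs β E x) = -β * (E x - freeEnergy β E) := by
  rw [gibbs, Real.log_div (Real.exp_pos _).ne' (partitionFunction_pos β E).ne', Real.log_exp,
    freeEnergy]
  field_simp
  ring

end Gibbs

lemma exp_neg_mul_work_sub_freeEnergy {S : Type*} [Fintype S] [Nonempty S] {β : ℝ} (hβ : β ≠ 0)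
    (E : ℕ → S → ℝ) (N : ℕ) (y : Fin N → S) :
    Real.exp (-β * ((∑ n : Fin N, (E (n + 1) (y n) - E n (y n)))
        - (freeEnergy β (E N) - freeEnergy β (E 0))))
      = ∏ n : Fin N, gibbs β (E (n + 1)) (y n) / gibbs β (E n) (y n) := by
  have hΔF : ∑ n : Fin N, (freeEnergy β (E (n + 1)) - freeEnergy β (E n))
      = freeEnergy β (E N) - freeEnergy β (E 0) := by
    rw [Fin.sum_univ_eq_sum_range (fun n => freeEnergy β (E (n + 1)) - freeEnergy β (E n))]
    exact sum_range_sub (fun n => freeEnergy β (E n)) N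
  rw [← hΔF, ← sum_sub_distrib, mul_sum, Real.exp_sum]
  refine prod_congr rfl fun n _ => ?_
  rw [← Real.exp_log (gibbs_pos β (E (n + 1)) (y n)), ← Real.exp_log (gibbs_pos β (E n) (y n)),
    ← Real.exp_sub, log_gibbs _ _ hβ, log_gibbs _ _ hβ]
  ring_nf

theorem stmt_8_general {S : Type*} [Fintype S] [Nonempty S] (N : ℕ)
    (β : ℝ) (hβ : 0 < β)
    (M : ℕ → Matrix S S ℝ) (p : ℕ → S → ℝ) (E : ℕ → S → ℝ)
    (hstat : ∀ n, 1 ≤ n → n ≤ N → ∀ x, ∑ y, M n x y * p n y = p n x)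
    (hE : ∀ n ≤ N, ∀ x, p n x = Real.exp (-β * E n x) / ∑ y, Real.exp (-β * E n y)) :
    ∑ x : Fin (N + 1) → S,
      (p 0 (x 0) * ∏ n : Fin N, M ((n : ℕ) + 1) (x n.succ) (x n.castSucc)) *
        Real.exp (-β * ((∑ n : Fin N, (E ((n : ℕ) + 1) (x n.castSucc) - E (n : ℕ) (x n.castSucc)))
          - ((-(1 / β) * Real.log (∑ y, Real.exp (-β * E N y)))
              - (-(1 / β) * Real.log (∑ y, Real.exp (-β * E 0 y)))))) = 1 := by
  change ∑ x, _ * Real.exp (-β * (_ - (freeEnergy β (E N) - freeEnergy β (E 0)))) = 1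
  have hp : ∀ n ≤ N, p n = gibbs β (E n) := fun n hn => funext (hE n hn)
  have htransport : ∀ n < N, ∀ b,
      ∑ a, p n a * (M (n + 1) b a * p (n + 1) a / p n a) = p (n + 1) b := by
    intro n hn b
    rw [← hstat (n + 1) (by omega) hn b]
    refine sum_congr rfl fun a _ => ?_
    rw [hp n hn.le]
    field_simp [(gibbs_pos β (E n) a).ne']
  calc _ = ∑ x : Fin (N + 1) → S, p 0 (x 0) * ∏ n : Fin N,
          M (n + 1) (x n.succ) (x n.castSucc) * p (n + 1) (x n.castSucc) / p n (x n.castSucc) := by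
        refine sum_congr rfl fun x _ => ?_
        rw [exp_neg_mul_work_sub_freeEnergy hβ.ne' E N (fun n => x n.castSucc), mul_assoc,
          ← prod_mul_distrib]
        refine congrArg _ (prod_congr rfl fun n _ => ?_)
        rw [hp _ n.isLt, hp _ n.isLt.le, mul_div_assoc]
    _ = ∑ b, p N b := sum_paths_eq_sum_last_of_transport N p _ htransport
    _ = 1 := by rw [hp N le_rfl, sum_gibbs]

/-- Jarzynski's equality for Markov chains: if the initial distribution
p_0 has strictly positive entries and the transition matrices M_1,...,M_N are
irreducible (with stationary distributions p_n and associated energies E_n at inverse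
temperature β), then the path expectation of e^{-β(W - ΔF)} equals 1. -/
theorem stmt_8 {S : Type*} [Fintype S] [DecidableEq S] [Nonempty S] (N : ℕ)
    (β : ℝ) (hβ : 0 < β)
    (M : ℕ → Matrix S S ℝ) (p : ℕ → S → ℝ) (E : ℕ → S → ℝ)
    (hp0 : ∀ x, 0 < p 0 x) (hp0sum : ∑ x, p 0 x = 1)
    (hstoch : ∀ n, 1 ≤ n → n ≤ N → (∀ x y, 0 ≤ M n x y) ∧ ∀ y, ∑ x, M n x y = 1)
    (hirr : ∀ n, 1 ≤ n → n ≤ N → ∀ x y, ∃ m : ℕ, 1 ≤ m ∧ 0 < ((M n) ^ m) x y)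
    (hstat : ∀ n, 1 ≤ n → n ≤ N → ∀ x, ∑ y, M n x y * p n y = p n x)
    (hE : ∀ n ≤ N, ∀ x, p n x = Real.exp (-β * E n x) / ∑ y, Real.exp (-β * E n y)) :
    ∑ x : Fin (N + 1) → S,
      (p 0 (x 0) * ∏ n : Fin N, M ((n : ℕ) + 1) (x n.succ) (x n.castSucc)) *
        Real.exp (-β * ((∑ n : Fin N, (E ((n : ℕ) + 1) (x n.castSucc) - E (n : ℕ) (x n.castSucc)))
          - ((-(1 / β) * Real.log (∑ y, Real.exp (-β * E N y)))
              - (-(1 / β) * Real.log (∑ y, Real.exp (-β * E 0 y)))))) = 1 :=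
  stmt_8_general N β hβ M p E hstat hE
end

section
/- Existence part of the detailed fluctuation relation: if X = (X_n)_{n=0}^N is a Markov chain on finite S with initial distribution p_0 having non-zero entries and irreducible transition matrices (M_n), then the Markov chain Y with initial distribution p_N and transition matrices M̂_{n+1} with (M̂_{n+1})_{xy} = (p_{N-n}(x)/p_{N-n}(y))(M_{N-n})_{yx} satisfies, for every realization x = (x_0,...,x_N): P(X_1=x_1,...,X_N=x_N | X_0=x_0) = P(Y_1=x_{N-1},...,Y_N=x_0 | Y_0=x_N) · e^{-βQ(x)}, where Q is the heat. -/
open Finset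

/-!
For a Gibbs distribution `p = e^{-βE}/Z` the ratio `p a / p b = e^{-β (E a - E b)}` does not involve
the partition function, so each factor `(p(x_{n-1}) / p(x_n)) (M_n)_{x_n x_{n-1}}` of the reversed
path probability equals the forward factor `(M_n)_{x_n x_{n-1}}` times `e^{β (E_n(x_n) - E_n(x_{n-1}))}`.
The exponentials multiply to `e^{βQ}`, which the factor `e^{-βQ}` cancels; reindexing `n ↦ N - 1 - n`
matches the reversed product with the forward one.
-/

theorem gibbs_div_gibbs {S : Type*} [Fintype S] (β : ℝ) (E : S → ℝ) (p : S → ℝ)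
    (hp : ∀ a, p a = Real.exp (-β * E a) / ∑ b, Real.exp (-β * E b)) (a b : S) :
    p a / p b = Real.exp (-β * (E a - E b)) := by
  have hZ : 0 < ∑ c, Real.exp (-β * E c) :=
    Finset.sum_pos (fun c _ => Real.exp_pos _) ⟨a, Finset.mem_univ a⟩
  rw [hp a, hp b, div_div_div_cancel_right₀ hZ.ne', ← Real.exp_sub]
  ring_nf

theorem gibbs_div_gibbs_mul_mul_exp {S : Type*} [Fintype S] (β : ℝ) (E : S → ℝ) (p : S → ℝ)
    (hp : ∀ a, p a = Real.exp (-β * E a) / ∑ b, Real.exp (-β * E b)) (a b : S) (m : ℝ) :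
    p a / p b * m * Real.exp (-β * (E b - E a)) = m := by
  rw [gibbs_div_gibbs β E p hp, mul_right_comm, ← Real.exp_add,
    show -β * (E a - E b) + -β * (E b - E a) = 0 by ring, Real.exp_zero, one_mul]

theorem prod_range_reverse_path {S M : Type*} [CommMonoid M] (N : ℕ) (f : ℕ → S → S → M)
    (x : ℕ → S) :
    ∏ n ∈ range N, f (N - n) (x (N - (n + 1))) (x (N - n))
      = ∏ n ∈ range N, f (n + 1) (x n) (x (n + 1)) := by
  rw [← prod_range_reflect]
  refine prod_congr rfl fun n hn => ?_
  have hn : n < N := mem_range.mp hn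
  rw [show N - (N - 1 - n) = n + 1 by omega, show N - (N - 1 - n + 1) = n by omega]

theorem stmt_10_general {S : Type*} [Fintype S] (N : ℕ)
    (β : ℝ)
    (M : ℕ → Matrix S S ℝ) (p : ℕ → S → ℝ) (E : ℕ → S → ℝ)
    (hE : ∀ n, 1 ≤ n → n ≤ N → ∀ a,
      p n a = Real.exp (-β * E n a) / ∑ b, Real.exp (-β * E n b)) :
    ∀ x : ℕ → S,
      (∏ n ∈ Finset.range N, M (n + 1) (x (n + 1)) (x n))
        = (∏ n ∈ Finset.range N,
            (p (N - n) (x (N - (n + 1))) / p (N - n) (x (N - n))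
              * M (N - n) (x (N - n)) (x (N - (n + 1)))))
          * Real.exp (-β * ∑ n ∈ Finset.range N, (E (n + 1) (x (n + 1)) - E (n + 1) (x n))) := by
  intro x
  rw [prod_range_reverse_path N (fun n a b => p n a / p n b * M n b a) x, mul_sum, Real.exp_sum,
    ← prod_mul_distrib]
  refine prod_congr rfl fun n hn => ?_
  have hn : n < N := mem_range.mp hn
  exact (gibbs_div_gibbs_mul_mul_exp β (E (n + 1)) (p (n + 1)) (hE (n + 1) (by omega) (by omega))
    (x n) (x (n + 1)) _).symm

/-- Existence part of the detailed fluctuation relation: the reversed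
chain Y (initial distribution p_N, transition matrices
(M̂_{n+1})_{xy} = (p_{N-n}(x)/p_{N-n}(y))(M_{N-n})_{yx}) satisfies, for every
realization x, P(X_1=x_1,...,X_N=x_N | X_0=x_0)
= P(Y_1=x_{N-1},...,Y_N=x_0 | Y_0=x_N) · e^{-βQ(x)}. -/
theorem stmt_10 {S : Type*} [Fintype S] [Nonempty S] (N : ℕ)
    (β : ℝ) (hβ : 0 < β)
    (M : ℕ → Matrix S S ℝ) (p : ℕ → S → ℝ) (E : ℕ → S → ℝ)
    (hstoch : ∀ n, 1 ≤ n → n ≤ N → (∀ a b, 0 ≤ M n a b) ∧ ∀ b, ∑ a, M n a b = 1)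
    (hstat : ∀ n, 1 ≤ n → n ≤ N → ∀ a, ∑ b, M n a b * p n b = p n a)
    (hpos : ∀ n, 1 ≤ n → n ≤ N → ∀ a, 0 < p n a)
    (hE : ∀ n, 1 ≤ n → n ≤ N → ∀ a,
      p n a = Real.exp (-β * E n a) / ∑ b, Real.exp (-β * E n b)) :
    ∀ x : ℕ → S,
      (∏ n ∈ Finset.range N, M (n + 1) (x (n + 1)) (x n))
        = (∏ n ∈ Finset.range N,
            (p (N - n) (x (N - (n + 1))) / p (N - n) (x (N - n))
              * M (N - n) (x (N - n)) (x (N - (n + 1)))))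
          * Real.exp (-β * ∑ n ∈ Finset.range N, (E (n + 1) (x (n + 1)) - E (n + 1) (x n))) :=
  stmt_10_general N β M p E hE
end

section
/- Detailed balance characterizes microscopic reversibility: if X = (X_n)_{n=0}^N is a Markov chain on finite S with positive initial distribution and irreducible transition matrices (M_n), then each M_n satisfies detailed balance (with respect to its stationary distribution p_n) if and only if X is microscopically reversible, i.e., the time reversal of X (the Markov chain with initial distribution p_N and transition matrices (M_{N-(n-1)})_{n=1}^N) satisfies the relation P(X_1=x_1,...,X_N=x_N|X_0=x_0) = P(Y_1=x_{N-1},...,Y_N=x_0|Y_0=x_N) e^{-βQ(x)} for all realizations x. -/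
/-!
Weight a step `u → v` of the `n`-th transition by the probability flux `M n v u * p n u`. Since
`p n` is a Gibbs distribution, `p n b / p n a = exp (-β (E n b - E n a))`, so the heat factor
turns microscopic reversibility into the statement that every path has the same flux weight
forwards and backwards; detailed balance says that every single flux matrix is symmetric.
Symmetric fluxes obviously give equal path weights. Conversely, each flux matrix has equal row
and column sums (stationarity and stochasticity), so summing the path identity over the last
(or the first) point of a path and cancelling the positive common factor shortens the identity
by one step; peeling off steps leaves the identity for a single step, which is its symmetry.
-/

open Finset
open scoped Matrix

section PathWeight

variable {S R : Type*}

def pathWeight [CommMonoid R] (D : ℕ → Matrix S S R) (L : ℕ) (x : ℕ → S) : R :=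
  ∏ j ∈ range L, D j (x j) (x (j + 1))

def PathSymmetric [CommMonoid R] (D : ℕ → Matrix S S R) (L : ℕ) : Prop :=
  ∀ x, pathWeight D L x = pathWeight (fun j => (D j)ᵀ) L x

section CommMonoid

variable [CommMonoid R] {D : ℕ → Matrix S S R} {L : ℕ}

theorem pathWeight_congr {x y : ℕ → S} (h : ∀ k ≤ L, x k = y k) :
    pathWeight D L x = pathWeight D L y :=
  prod_congr rfl fun j hj => by
    have := mem_range.mp hj
    rw [h j (by omega), h (j + 1) (by omega)]

theorem pathWeight_succ (x : ℕ → S) :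
    pathWeight D (L + 1) x = pathWeight D L x * D L (x L) (x (L + 1)) :=
  prod_range_succ _ _

theorem pathWeight_cons (w : S) (x : ℕ → S) :
    pathWeight D (L + 1) (Stream'.cons w x) = pathWeight (fun j => D (j + 1)) L x * D 0 w (x 0) :=
  prod_range_succ' _ _

theorem pathSymmetric_of_isSymm (h : ∀ j < L, (D j).IsSymm) : PathSymmetric D L :=
  fun _ => prod_congr rfl fun j hj => (h j (mem_range.mp hj)).apply _ _

end CommMonoid

section Sum

variable [Fintype S] [CommSemiring R] {D : ℕ → Matrix S S R} {L : ℕ}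

theorem sum_pathWeight_update_succ (x : ℕ → S) :
    ∑ w, pathWeight D (L + 1) (Function.update x (L + 1) w) =
      pathWeight D L x * ∑ w, D L (x L) w := by
  rw [mul_sum]
  refine sum_congr rfl fun w _ => ?_
  rw [pathWeight_succ, Function.update_self, Function.update_of_ne (by omega),
    pathWeight_congr (y := x) fun k hk => Function.update_of_ne (by omega) _ _]

theorem sum_pathWeight_cons (x : ℕ → S) :
    ∑ w, pathWeight D (L + 1) (Stream'.cons w x) =
      pathWeight (fun j => D (j + 1)) L x * ∑ w, D 0 w (x 0) := by
  simp only [pathWeight_cons, mul_sum]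

end Sum

section Cancel

variable [Fintype S] [CommRing R] [IsDomain R] {D : ℕ → Matrix S S R} {L : ℕ}

theorem PathSymmetric.of_succ {q : S → R} (hq : ∀ w, q w ≠ 0)
    (hrow : ∀ w, ∑ v, D L w v = q w) (hcol : ∀ w, ∑ u, D L u w = q w)
    (h : PathSymmetric D (L + 1)) : PathSymmetric D L := fun x =>
  mul_right_cancel₀ (hq (x L)) <|
    calc pathWeight D L x * q (x L)
        = ∑ w, pathWeight D (L + 1) (Function.update x (L + 1) w) := by
          rw [sum_pathWeight_update_succ, hrow]
      _ = ∑ w, pathWeight (fun j => (D j)ᵀ) (L + 1) (Function.update x (L + 1) w) :=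
          sum_congr rfl fun _ _ => h _
      _ = pathWeight (fun j => (D j)ᵀ) L x * q (x L) := by
          rw [sum_pathWeight_update_succ]
          simp only [Matrix.transpose_apply, hcol]

theorem PathSymmetric.tail {q : S → R} (hq : ∀ w, q w ≠ 0)
    (hrow : ∀ w, ∑ v, D 0 w v = q w) (hcol : ∀ w, ∑ u, D 0 u w = q w)
    (h : PathSymmetric D (L + 1)) : PathSymmetric (fun j => D (j + 1)) L := fun x =>
  mul_right_cancel₀ (hq (x 0)) <|
    calc pathWeight (fun j => D (j + 1)) L x * q (x 0)
        = ∑ w, pathWeight D (L + 1) (Stream'.cons w x) := by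
          rw [sum_pathWeight_cons, hcol]
      _ = ∑ w, pathWeight (fun j => (D j)ᵀ) (L + 1) (Stream'.cons w x) :=
          sum_congr rfl fun _ _ => h _
      _ = pathWeight (fun j => (D (j + 1))ᵀ) L x * q (x 0) := by
          rw [sum_pathWeight_cons]
          simp only [Matrix.transpose_apply, hrow]

theorem PathSymmetric.isSymm {q : ℕ → S → R} (hq : ∀ j < L, ∀ w, q j w ≠ 0)
    (hrow : ∀ j < L, ∀ w, ∑ v, D j w v = q j w) (hcol : ∀ j < L, ∀ w, ∑ u, D j u w = q j w)
    (h : PathSymmetric D L) : ∀ j < L, (D j).IsSymm := by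
  induction L generalizing D q with
  | zero => intro j hj; omega
  | succ L ih =>
    intro j hj
    rcases Nat.lt_succ_iff_lt_or_eq.mp hj with hjL | rfl
    · exact ih (fun j hj => hq j (by omega)) (fun j hj => hrow j (by omega))
        (fun j hj => hcol j (by omega)) (h.of_succ (hq L (by omega)) (hrow L (by omega))
          (hcol L (by omega))) j hjL
    cases j with
    | zero =>
      refine Matrix.IsSymm.ext fun u v => ?_
      simpa [pathWeight] using h fun k => if k = 0 then v else u
    | succ j =>
      exact ih (q := fun j => q (j + 1)) (fun j hj => hq (j + 1) (by omega))
        (fun j hj => hrow (j + 1) (by omega)) (fun j hj => hcol (j + 1) (by omega))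
        (h.tail (hq 0 (by omega)) (hrow 0 (by omega)) (hcol 0 (by omega))) j (by omega)

theorem pathSymmetric_iff_isSymm {q : ℕ → S → R} (hq : ∀ j < L, ∀ w, q j w ≠ 0)
    (hrow : ∀ j < L, ∀ w, ∑ v, D j w v = q j w) (hcol : ∀ j < L, ∀ w, ∑ u, D j u w = q j w) :
    PathSymmetric D L ↔ ∀ j < L, (D j).IsSymm :=
  ⟨PathSymmetric.isSymm hq hrow hcol, pathSymmetric_of_isSymm⟩

end Cancel

end PathWeight

theorem prod_range_reverse_steps {S R : Type*} [CommMonoid R] (f : ℕ → S → S → R) (N : ℕ)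
    (x : ℕ → S) :
    ∏ n ∈ range N, f (N - n) (x (N - (n + 1))) (x (N - n)) =
      ∏ n ∈ range N, f (n + 1) (x n) (x (n + 1)) := by
  rw [← prod_range_reflect (fun n => f (n + 1) (x n) (x (n + 1)))]
  refine prod_congr rfl fun n hn => ?_
  have := mem_range.mp hn
  rw [show N - (n + 1) = N - 1 - n by omega, show N - n = N - 1 - n + 1 by omega]

theorem exp_neg_mul_sub_mul_gibbs {S : Type*} {β Z : ℝ} {E p : S → ℝ}
    (hp : ∀ a, p a = Real.exp (-β * E a) / Z) (a b : S) :
    Real.exp (-β * (E b - E a)) * p a = p b := by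
  rw [hp, hp, ← mul_div_assoc, ← Real.exp_add]
  congr 2
  ring

theorem exp_neg_mul_heat_mul_prod {S : Type*} {β : ℝ} {N : ℕ} {E p : ℕ → S → ℝ} {Z : ℕ → ℝ}
    (hp : ∀ n < N, ∀ a, p (n + 1) a = Real.exp (-β * E (n + 1) a) / Z n) (x : ℕ → S) :
    Real.exp (-β * ∑ n ∈ range N, (E (n + 1) (x (n + 1)) - E (n + 1) (x n))) *
        ∏ n ∈ range N, p (n + 1) (x n) =
      ∏ n ∈ range N, p (n + 1) (x (n + 1)) := by
  rw [mul_sum, Real.exp_sum, ← prod_mul_distrib]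
  exact prod_congr rfl fun n hn => exp_neg_mul_sub_mul_gibbs (hp n (mem_range.mp hn)) _ _

theorem stmt_13_general {S : Type*} [Fintype S] (N : ℕ)
    (β : ℝ)
    (M : ℕ → Matrix S S ℝ) (p : ℕ → S → ℝ) (E : ℕ → S → ℝ)
    (hstoch : ∀ n, 1 ≤ n → n ≤ N → (∀ a b, 0 ≤ M n a b) ∧ ∀ b, ∑ a, M n a b = 1)
    (hstat : ∀ n, 1 ≤ n → n ≤ N → ∀ a, ∑ b, M n a b * p n b = p n a)
    (hpos : ∀ n, 1 ≤ n → n ≤ N → ∀ a, 0 < p n a)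
    (hE : ∀ n ≤ N, ∀ a, p n a = Real.exp (-β * E n a) / ∑ b, Real.exp (-β * E n b)) :
    (∀ n, 1 ≤ n → n ≤ N → ∀ a b, M n b a * p n a = M n a b * p n b)
    ↔
    (∀ x : ℕ → S,
      (∏ n ∈ Finset.range N, M (n + 1) (x (n + 1)) (x n))
        = (∏ n ∈ Finset.range N, M (N - n) (x (N - (n + 1))) (x (N - n)))
          * Real.exp (-β * ∑ n ∈ Finset.range N,
              (E (n + 1) (x (n + 1)) - E (n + 1) (x n)))) := by
  set F : ℕ → Matrix S S ℝ := fun j => Matrix.of fun u v => M (j + 1) u v * p (j + 1) v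
  have hbalance : (∀ n, 1 ≤ n → n ≤ N → ∀ a b, M n b a * p n a = M n a b * p n b) ↔
      ∀ j < N, (F j).IsSymm := by
    simp only [Matrix.IsSymm.ext_iff, F, Matrix.of_apply]
    refine ⟨fun h j hj => h (j + 1) (by omega) hj, fun h n h1 hn => ?_⟩
    obtain ⟨j, rfl⟩ := Nat.exists_eq_add_of_le' h1
    exact h j (by omega)
  have hreversible : ∀ x : ℕ → S,
      ((∏ n ∈ range N, M (n + 1) (x (n + 1)) (x n)) =
          (∏ n ∈ range N, M (N - n) (x (N - (n + 1))) (x (N - n))) *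
            Real.exp (-β * ∑ n ∈ range N, (E (n + 1) (x (n + 1)) - E (n + 1) (x n)))) ↔
        pathWeight (fun j => (F j)ᵀ) N x = pathWeight F N x := by
    intro x
    have hP : ∏ n ∈ range N, p (n + 1) (x n) ≠ 0 :=
      (prod_pos fun n hn => hpos (n + 1) (by omega) (mem_range.mp hn) _).ne'
    rw [prod_range_reverse_steps (fun n => M n), ← mul_left_inj' hP, mul_assoc,
      exp_neg_mul_heat_mul_prod (fun n hn => hE (n + 1) hn) x]
    simp only [pathWeight, F, Matrix.transpose_apply, Matrix.of_apply, prod_mul_distrib]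
  have hcol : ∀ j < N, ∀ w, ∑ u, F j u w = p (j + 1) w := fun j hj w => by
    simp only [F, Matrix.of_apply, ← sum_mul, (hstoch (j + 1) (by omega) hj).2, one_mul]
  rw [hbalance, ← pathSymmetric_iff_isSymm (D := F) (q := fun j => p (j + 1))
    (fun j hj w => (hpos (j + 1) (by omega) hj w).ne')
    (fun j hj w => hstat (j + 1) (by omega) hj w) hcol]
  exact forall_congr' fun x => eq_comm.trans (hreversible x).symm

/-- Detailed balance characterizes microscopic reversibility: each M_n
satisfies detailed balance with respect to its stationary distribution p_n if and only
if the time reversal of X (initial distribution p_N, transition matrices in reversed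
order) satisfies P(X_1=x_1,...,X_N=x_N|X_0=x_0)
= P(Y_1=x_{N-1},...,Y_N=x_0|Y_0=x_N) e^{-βQ(x)} for all realizations x. -/
theorem stmt_13 {S : Type*} [Fintype S] [DecidableEq S] [Nonempty S] (N : ℕ)
    (β : ℝ) (hβ : 0 < β)
    (M : ℕ → Matrix S S ℝ) (p : ℕ → S → ℝ) (E : ℕ → S → ℝ)
    (hp0 : ∀ x, 0 < p 0 x) (hp0sum : ∑ x, p 0 x = 1)
    (hstoch : ∀ n, 1 ≤ n → n ≤ N → (∀ a b, 0 ≤ M n a b) ∧ ∀ b, ∑ a, M n a b = 1)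
    (hirr : ∀ n, 1 ≤ n → n ≤ N → ∀ a b, ∃ m : ℕ, 1 ≤ m ∧ 0 < ((M n) ^ m) a b)
    (hstat : ∀ n, 1 ≤ n → n ≤ N → ∀ a, ∑ b, M n a b * p n b = p n a)
    (hpos : ∀ n, 1 ≤ n → n ≤ N → ∀ a, 0 < p n a)
    (hE : ∀ n ≤ N, ∀ a, p n a = Real.exp (-β * E n a) / ∑ b, Real.exp (-β * E n b)) :
    (∀ n, 1 ≤ n → n ≤ N → ∀ a b, M n b a * p n a = M n a b * p n b)
    ↔
    (∀ x : ℕ → S,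
      (∏ n ∈ Finset.range N, M (n + 1) (x (n + 1)) (x n))
        = (∏ n ∈ Finset.range N, M (N - n) (x (N - (n + 1))) (x (N - n)))
          * Real.exp (-β * ∑ n ∈ Finset.range N,
              (E (n + 1) (x (n + 1)) - E (n + 1) (x n)))) :=
  stmt_13_general N β M p E hstoch hstat hpos hE
end
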